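/- The total number of k-Dyck paths with N down-steps equals the sum over all compositions: ∑_{a_1+⋯+a_k=N, a_i≥0} (1/N) C(N-1+a_1,a_1) ⋯ C(N-1+a_{k-1},a_{k-1}) C(N+a_k, a_k - 1) = (1/(kN+1)) C((k+1)N, N). -/

import Mathlib

/-!
Both binomial factors are coefficients of powers of `(1 - X)⁻¹`: `C(N-1+a, a)` is the `a`-th
coefficient of `(1 - X)^(-N)` and `C(N+a, a-1)` that of `X (1 - X)^(-(N+2))`. The sum over
compositions is therefore the `N`-th coefficient of `X (1 - X)^(-(kN+2))`, namely
`C((k+1)N, N-1)`, and `C((k+1)N, N-1) / N = C((k+1)N, N) / (kN+1)`.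
-/

open PowerSeries Finset

theorem PowerSeries.coeff_prod_eq_sum_antidiagonalTuple {R : Type*} [CommSemiring R] {m : ℕ}
    (f : Fin m → R⟦X⟧) (n : ℕ) :
    coeff n (∏ i, f i) = ∑ a ∈ Nat.antidiagonalTuple m n, ∏ i, coeff (a i) (f i) := by
  rw [coeff_prod, ← piAntidiag_univ_fin_eq_antidiagonalTuple, finsuppAntidiag, sum_map,
    ← sum_attach (piAntidiag univ n)]
  rfl

section invOneSubPow

variable {S : Type*} [CommRing S]

theorem PowerSeries.coeff_invOneSubPow_val {d : ℕ} (hd : 0 < d) (n : ℕ) :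
    coeff n (invOneSubPow S d).val = (d - 1 + n).choose n := by
  rw [invOneSubPow_val_eq_mk_sub_one_add_choose_of_pos S d hd, coeff_mk, Nat.choose_symm_add]

theorem PowerSeries.coeff_X_mul_invOneSubPow_val (d n : ℕ) :
    coeff n ((X : S⟦X⟧) * (invOneSubPow S (d + 2)).val)
      = if n = 0 then 0 else (d + n).choose (n - 1) := by
  rcases n with _ | n
  · simp
  · rw [coeff_succ_X_mul, coeff_invOneSubPow_val (by omega), if_neg n.succ_ne_zero,
      show d + 2 - 1 + n = d + (n + 1) by omega, Nat.add_sub_cancel]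

theorem PowerSeries.invOneSubPow_mul (d m : ℕ) :
    invOneSubPow S (m * d) = invOneSubPow S d ^ m := by
  simp_rw [invOneSubPow_eq_inv_one_sub_pow, mul_comm m d, pow_mul]

end invOneSubPow

theorem Fin.prod_ite_val_lt_sub_one {M : Type*} [CommMonoid M] {k : ℕ} (hk : 1 ≤ k)
    (f g : Fin k → M) :
    ∏ i : Fin k, (if (i : ℕ) < k - 1 then f i else g i)
      = (∏ i ∈ univ.filter (fun i : Fin k => (i : ℕ) < k - 1), f i) *
          g ⟨k - 1, Nat.sub_lt hk Nat.one_pos⟩ := by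
  have hlast : univ.filter (fun i : Fin k => ¬ (i : ℕ) < k - 1)
      = {⟨k - 1, Nat.sub_lt hk Nat.one_pos⟩} := by
    ext i
    simp only [mem_filter, mem_univ, true_and, mem_singleton, Fin.ext_iff]
    omega
  rw [prod_ite, hlast, prod_singleton]

theorem Nat.one_div_mul_choose_pred {K : Type*} [Field K] [CharZero K] (n r : ℕ) (hr : 0 < r) :
    (1 / r : K) * (n + r).choose (r - 1) = 1 / (n + 1) * (n + r).choose r := by
  have h := Nat.choose_succ_right_eq (n + r) (r - 1)
  rw [Nat.sub_add_cancel hr, show n + r - (r - 1) = n + 1 by omega] at h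
  have hK : ((n + r).choose (r - 1) : K) * (n + 1) = (n + r).choose r * r := by
    exact_mod_cast h.symm
  have hr' : (r : K) ≠ 0 := Nat.cast_ne_zero.mpr hr.ne'
  field_simp
  linear_combination hK

noncomputable def kDyckFactor (k N : ℕ) (i : Fin k) : ℚ⟦X⟧ :=
  if (i : ℕ) < k - 1 then (invOneSubPow ℚ N).val else X * (invOneSubPow ℚ (N + 2)).val

theorem prod_kDyckFactor {k : ℕ} (hk : 1 ≤ k) (N : ℕ) :
    ∏ i, kDyckFactor k N i = X * (invOneSubPow ℚ (k * N + 2)).val := by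
  have hexp : (k - 1) * N + (N + 2) = k * N + 2 := by
    obtain ⟨m, rfl⟩ := Nat.exists_eq_add_of_le' hk
    simp only [Nat.add_sub_cancel]
    ring
  unfold kDyckFactor
  rw [Fin.prod_ite_val_lt_sub_one hk, prod_const, Fin.card_filter_val_lt,
    min_eq_right (Nat.sub_le k 1), ← Units.val_pow_eq_pow_val, ← invOneSubPow_mul,
    mul_left_comm, ← Units.val_mul, ← invOneSubPow_add, hexp]

theorem prod_coeff_kDyckFactor {k N : ℕ} (hk : 1 ≤ k) (hN : 1 ≤ N) (a : Fin k → ℕ) :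
    ∏ i, coeff (a i) (kDyckFactor k N i)
      = (∏ i ∈ univ.filter (fun i : Fin k => (i : ℕ) < k - 1),
          ((N - 1 + a i).choose (a i) : ℚ)) *
        (if a ⟨k - 1, Nat.sub_lt hk Nat.one_pos⟩ = 0 then 0
         else ((N + a ⟨k - 1, Nat.sub_lt hk Nat.one_pos⟩).choose
           (a ⟨k - 1, Nat.sub_lt hk Nat.one_pos⟩ - 1) : ℚ)) := by
  have hfactor (i : Fin k) : coeff (a i) (kDyckFactor k N i) = if (i : ℕ) < k - 1
      then ((N - 1 + a i).choose (a i) : ℚ)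
      else if a i = 0 then 0 else ((N + a i).choose (a i - 1) : ℚ) := by
    simp only [kDyckFactor, apply_ite (coeff (a i)), coeff_invOneSubPow_val hN,
      coeff_X_mul_invOneSubPow_val, Nat.cast_ite, Nat.cast_zero]
  rw [prod_congr rfl fun i _ => hfactor i, Fin.prod_ite_val_lt_sub_one hk]

/-- The total number of `k`-Dyck paths with `N` down-steps equals the sum of the refined
counts over all compositions `a₁+⋯+a_k = N`:
`∑ (1/N) C(N-1+a₁,a₁) ⋯ C(N-1+a_{k-1},a_{k-1}) C(N+a_k, a_k-1) = (1/(kN+1)) C((k+1)N, N)`,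
with the convention `C(m,-1) = 0`. -/
theorem kDyck_total (k N : ℕ) (hk : 1 ≤ k) (hN : 1 ≤ N) :
    ∑ a ∈ Finset.Nat.antidiagonalTuple k N,
        (1 / N : ℚ) *
          ((∏ i ∈ Finset.univ.filter (fun i : Fin k => (i : ℕ) < k - 1),
              (Nat.choose (N - 1 + a i) (a i) : ℚ)) *
            (if a ⟨k - 1, by omega⟩ = 0 then 0
             else (Nat.choose (N + a ⟨k - 1, by omega⟩) (a ⟨k - 1, by omega⟩ - 1) : ℚ)))
      = (1 / (k * N + 1) : ℚ) * Nat.choose ((k + 1) * N) N := by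
  rw [← mul_sum, ← sum_congr rfl fun a _ => prod_coeff_kDyckFactor hk hN a,
    ← coeff_prod_eq_sum_antidiagonalTuple, prod_kDyckFactor hk, coeff_X_mul_invOneSubPow_val,
    if_neg (by omega), add_one_mul]
  exact_mod_cast Nat.one_div_mul_choose_pred (k * N) N hN
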